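/- Let J be a closed subspace of a Banach space X satisfying the 6-ball property: for all z_1, …, z_6 in the closed unit ball of J, all x in the closed unit ball of X and all ε > 0 there is y ∈ J with ‖x + z_i − y‖ ≤ 1 + ε for i = 1, …, 6. Then J satisfies the averaged 3-ball property (A). -/

import Mathlib

open Filter Topology

noncomputable section

/-- The averaged 3-ball property (A) for a subspace `J` of `X`. -/
def AvgThreeBall {X : Type*} [NormedAddCommGroup X] [NormedSpace ℝ X]
    (J : Submodule ℝ X) : Prop :=
  ∀ y₁ y₂ y₃ x : X, y₁ ∈ J → y₂ ∈ J → y₃ ∈ J →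
    ‖y₁‖ ≤ 1 → ‖y₂‖ ≤ 1 → ‖y₃‖ ≤ 1 → ‖x‖ ≤ 1 →
    ∀ ε : ℝ, 0 < ε → ∃ y ∈ J,
      ‖x + y₁ - y‖ + ‖x - y₁ - y‖ ≤ 2 * (1 + ε) ∧
      ‖x + y₂ - y‖ + ‖x - y₂ - y‖ ≤ 2 * (1 + ε) ∧
      ‖x + y₃ - y‖ + ‖x - y₃ - y‖ ≤ 2 * (1 + ε)

/-- The 6-ball property for a subspace `J` of `X`. -/
def SixBall {X : Type*} [NormedAddCommGroup X] [NormedSpace ℝ X]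
    (J : Submodule ℝ X) : Prop :=
  ∀ z : Fin 6 → X, (∀ i, z i ∈ J) → (∀ i, ‖z i‖ ≤ 1) →
    ∀ x : X, ‖x‖ ≤ 1 → ∀ ε : ℝ, 0 < ε → ∃ y ∈ J, ∀ i, ‖x + z i - y‖ ≤ 1 + ε

lemma norm_add_sub_add_norm_sub_sub_le {X : Type*} [SeminormedAddCommGroup X] {x z y : X}
    {r : ℝ} (hadd : ‖x + z - y‖ ≤ r) (hsub : ‖x + -z - y‖ ≤ r) :
    ‖x + z - y‖ + ‖x - z - y‖ ≤ 2 * r := by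
  rw [← sub_eq_add_neg] at hsub
  linarith

theorem avgThreeBall_of_sixBall_general
    (X : Type*) [NormedAddCommGroup X] [NormedSpace ℝ X]
    (J : Submodule ℝ X) (h6 : SixBall J) :
    AvgThreeBall J := by
  intro y₁ y₂ y₃ x hy₁ hy₂ hy₃ hn₁ hn₂ hn₃ hx ε hε
  obtain ⟨y, hyJ, hy⟩ := h6 ![y₁, -y₁, y₂, -y₂, y₃, -y₃]
    (by simp [Fin.forall_fin_succ, hy₁, hy₂, hy₃])
    (by simp [Fin.forall_fin_succ, hn₁, hn₂, hn₃]) x hx ε hε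
  exact ⟨y, hyJ, norm_add_sub_add_norm_sub_sub_le (hy 0) (hy 1),
    norm_add_sub_add_norm_sub_sub_le (hy 2) (hy 3),
    norm_add_sub_add_norm_sub_sub_le (hy 4) (hy 5)⟩

/-- The 6-ball property implies the averaged 3-ball property (A). -/
theorem avgThreeBall_of_sixBall
    (X : Type*) [NormedAddCommGroup X] [NormedSpace ℝ X] [CompleteSpace X]
    (J : Submodule ℝ X) (hJ : IsClosed (J : Set X)) (h6 : SixBall J) :
    AvgThreeBall J :=
  avgThreeBall_of_sixBall_general X J h6
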